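/- arXiv:1806.10964 — 7 statements merged into one kernel-verified Lean document; each statement's English description precedes it below -/
import Mathlib

section
/- For the function f(x) = γ·(log x)^t with constants γ > 0 and t ≥ 1, the iterated-star function f*(x) satisfies f*(x) = Θ(log* x) as x → ∞, where log* is the iterated logarithm. -/
open Real

/-- `x₀ = sup{x ≥ 1 : f(x) ≥ x} + 1`. -/
noncomputable def xZero (f : ℝ → ℝ) : ℝ :=
  sSup {x : ℝ | 1 ≤ x ∧ x ≤ f x} + 1

/-- `f*(x) = min{c ≥ 1 : f^(c)(x) ≤ x₀}` for `x > x₀`, and `1` otherwise. -/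
noncomputable def fStar (f : ℝ → ℝ) (x : ℝ) : ℕ :=
  if xZero f < x then sInf {c : ℕ | 1 ≤ c ∧ f^[c] x ≤ xZero f} else 1

/-- `log*`: the number of times `log₂` must be applied to get a value at most 2. -/
noncomputable def logStar (x : ℝ) : ℕ :=
  sInf {c : ℕ | (fun y => Real.logb 2 y)^[c] x ≤ 2}

/-- Stopping count: least `c` with `F^[c] x ≤ τ`. -/
private noncomputable def NN (F : ℝ → ℝ) (τ : ℝ) (x : ℝ) : ℕ :=
  sInf {c : ℕ | F^[c] x ≤ τ}

private lemma NN_le {F : ℝ → ℝ} {τ x : ℝ} {c : ℕ} (h : F^[c] x ≤ τ) : NN F τ x ≤ c :=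
  Nat.sInf_le h

private lemma NN_spec {F : ℝ → ℝ} {τ x : ℝ} (h : ∃ c, F^[c] x ≤ τ) :
    F^[NN F τ x] x ≤ τ :=
  Nat.sInf_mem h

private lemma NN_zero {F : ℝ → ℝ} {τ x : ℝ} (h : x ≤ τ) : NN F τ x = 0 :=
  Nat.le_zero.mp (NN_le (by simpa using h))

private lemma NN_pos {F : ℝ → ℝ} {τ x : ℝ} (hx : τ < x) (hne : ∃ c, F^[c] x ≤ τ) :
    1 ≤ NN F τ x := by
  rcases Nat.eq_zero_or_pos (NN F τ x) with h | h
  · exfalso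
    have h2 := NN_spec hne
    rw [h] at h2
    simp only [Function.iterate_zero_apply] at h2
    linarith
  · exact h

private lemma NN_shift {F : ℝ → ℝ} {τ x : ℝ} (k : ℕ) (h : ∃ c, F^[c] (F^[k] x) ≤ τ) :
    NN F τ x ≤ NN F τ (F^[k] x) + k := by
  apply NN_le
  rw [Function.iterate_add_apply]
  exact NN_spec h

private lemma NN_rec_le {F : ℝ → ℝ} {τ x : ℝ} (hx : τ < x) (hne : ∃ c, F^[c] x ≤ τ) :
    NN F τ (F x) + 1 ≤ NN F τ x := by
  have h1 : 1 ≤ NN F τ x := NN_pos hx hne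
  have h2 : F^[NN F τ x - 1] (F x) ≤ τ := by
    rw [← Function.iterate_succ_apply, Nat.succ_eq_add_one, Nat.sub_add_cancel h1]
    exact NN_spec hne
  have := NN_le h2
  omega

private lemma stop_aux {F : ℝ → ℝ} {τ : ℝ} (hτ : 1 ≤ τ)
    (hmono : ∀ a b, 1 ≤ a → a ≤ b → F a ≤ F b) :
    ∀ c : ℕ, ∀ z y : ℝ, F^[c] z ≤ τ → 1 ≤ y → y ≤ z → ∃ k ≤ c, F^[k] y ≤ τ := by
  intro c
  induction c with
  | zero =>
    intro z y hz hy hyz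
    simp only [Function.iterate_zero_apply] at hz
    exact ⟨0, le_refl 0, by simpa using le_trans hyz hz⟩
  | succ c ih =>
    intro z y hz hy hyz
    by_cases hyτ : y ≤ τ
    · exact ⟨0, by omega, by simpa using hyτ⟩
    · have hFy : F y ≤ F z := hmono y z hy hyz
      by_cases hFy1 : 1 ≤ F y
      · obtain ⟨k, hk, hk2⟩ := ih (F z) (F y) (by rwa [← Function.iterate_succ_apply]) hFy1 hFy
        exact ⟨k + 1, by omega, by rwa [Function.iterate_succ_apply]⟩
      · have hτ' : F y ≤ τ := le_trans (le_of_lt (not_le.mp hFy1)) hτ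
        exact ⟨1, by omega, by simpa using hτ'⟩

private lemma NN_mono {F : ℝ → ℝ} {τ : ℝ} (hτ : 1 ≤ τ)
    (hmono : ∀ a b, 1 ≤ a → a ≤ b → F a ≤ F b) {y z : ℝ}
    (hy : 1 ≤ y) (hyz : y ≤ z) (hz : ∃ c, F^[c] z ≤ τ) : NN F τ y ≤ NN F τ z := by
  obtain ⟨k, hk, hk2⟩ := stop_aux hτ hmono (NN F τ z) z y (NN_spec hz) hy hyz
  exact le_trans (NN_le hk2) hk

private lemma stop_term {F : ℝ → ℝ} {τ δ : ℝ} (hδ : 0 < δ)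
    (hdec : ∀ y, τ < y → F y ≤ y - δ) : ∀ x, ∃ c, F^[c] x ≤ τ := by
  have key : ∀ n : ℕ, ∀ x, x ≤ τ + n * δ → ∃ c, F^[c] x ≤ τ := by
    intro n
    induction n with
    | zero => intro x hx; exact ⟨0, by simpa using hx⟩
    | succ n ih =>
      intro x hx
      by_cases hxτ : x ≤ τ
      · exact ⟨0, by simpa using hxτ⟩
      · have h1 : F x ≤ τ + n * δ := by
          have := hdec x (not_le.mp hxτ)
          push_cast at hx ⊢
          linarith
        obtain ⟨c, hc⟩ := ih (F x) h1
        exact ⟨c + 1, by rwa [Function.iterate_succ_apply]⟩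
  intro x
  obtain ⟨n, hn⟩ := exists_nat_ge ((x - τ) / δ)
  refine key n x ?_
  rw [div_le_iff₀ hδ] at hn
  linarith

open Filter in
private lemma ev_helper (a r c : ℝ) (hc : 0 < c) :
    ∀ᶠ x in atTop, a * (Real.log x) ^ r ≤ c * x := by
  rcases le_or_gt a 0 with ha | ha
  · filter_upwards [eventually_ge_atTop (1 : ℝ)] with x hx
    have h1 : (0:ℝ) ≤ Real.log x ^ r := Real.rpow_nonneg (Real.log_nonneg hx) r
    nlinarith
  · have h := (isLittleO_log_rpow_rpow_atTop r (one_pos)).def (div_pos hc ha)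
    filter_upwards [h, eventually_ge_atTop (1 : ℝ)] with x hb hx
    have hl : (0:ℝ) ≤ Real.log x := Real.log_nonneg hx
    have h1 : (0:ℝ) ≤ Real.log x ^ r := Real.rpow_nonneg hl r
    rw [Real.norm_eq_abs, Real.norm_eq_abs, Real.rpow_one, abs_of_nonneg h1,
      abs_of_nonneg (by linarith : (0:ℝ) ≤ x)] at hb
    calc a * Real.log x ^ r ≤ a * (c / a * x) := mul_le_mul_of_nonneg_left hb ha.le
      _ = c * x := by field_simp

set_option maxHeartbeats 1000000 in
/-- for `f x = γ * (log x) ^ t` with `γ > 0`, `t ≥ 1`,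
the function `f*` satisfies `f*(x) = Θ(log* x)` as `x → ∞`. -/
theorem stmt2 (γ t : ℝ) (hγ : 0 < γ) (ht : 1 ≤ t) :
    ∃ C₁ C₂ X : ℝ, 0 < C₁ ∧ 0 < C₂ ∧ ∀ x : ℝ, X ≤ x →
      C₁ * (logStar x : ℝ) ≤ (fStar (fun y => γ * (Real.log y) ^ t) x : ℝ) ∧
      (fStar (fun y => γ * (Real.log y) ^ t) x : ℝ) ≤ C₂ * (logStar x : ℝ) := by
  set f : ℝ → ℝ := fun y => γ * Real.log y ^ t with hfdef
  set g : ℝ → ℝ := fun y => Real.logb 2 y with hgdef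
  have hfx : ∀ y : ℝ, f y = γ * Real.log y ^ t := fun y => rfl
  have hgx : ∀ y : ℝ, g y = Real.log y / Real.log 2 := fun y => rfl
  have ht0 : (0:ℝ) < t := lt_of_lt_of_le one_pos ht
  have hlog2_pos : (0:ℝ) < Real.log 2 := Real.log_pos one_lt_two
  have hlog2_half : (1:ℝ)/2 < Real.log 2 := by
    have := Real.log_two_gt_d9; linarith
  have hlog2_lt1 : Real.log 2 < 1 := by
    have := Real.log_two_lt_d9; linarith
  -- monotonicity on [1, ∞)
  have fmono : ∀ a b : ℝ, 1 ≤ a → a ≤ b → f a ≤ f b := by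
    intro a b ha hab
    have h1 : Real.log a ≤ Real.log b := Real.log_le_log (by linarith) hab
    have h2 : (0:ℝ) ≤ Real.log a := Real.log_nonneg ha
    have h3 := Real.rpow_le_rpow h2 h1 ht0.le
    rw [hfx a, hfx b]
    exact mul_le_mul_of_nonneg_left h3 hγ.le
  have gmono : ∀ a b : ℝ, 1 ≤ a → a ≤ b → g a ≤ g b := by
    intro a b ha hab
    rw [hgx a, hgx b]
    exact (div_le_div_iff_of_pos_right hlog2_pos).mpr (Real.log_le_log (by linarith) hab)
  -- f x ≤ x/2 for large x
  obtain ⟨Mh, hMh⟩ := Filter.eventually_atTop.mp (ev_helper γ t (1/2) (by norm_num))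
  have hhalf : ∀ x : ℝ, max Mh 2 ≤ x → f x ≤ x / 2 := by
    intro x hx
    have h := hMh x (le_trans (le_max_left _ _) hx)
    rw [hfx]
    linarith
  -- x₀ facts
  set S₀ : Set ℝ := {x : ℝ | 1 ≤ x ∧ x ≤ f x} with hS₀def
  have hbdd : BddAbove S₀ := by
    refine ⟨max Mh 2, fun x hx => ?_⟩
    by_contra hcon
    push_neg at hcon
    have h2 : f x ≤ x / 2 := hhalf x hcon.le
    have hx2 : (2:ℝ) ≤ x := le_trans (le_max_right _ _) hcon.le
    have := hx.2
    linarith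
  set τ : ℝ := xZero f with hτdef
  have hτS : τ = sSup S₀ + 1 := rfl
  have hτ1 : 1 ≤ τ := by
    rcases Set.eq_empty_or_nonempty S₀ with he | hne
    · rw [hτS, he, Real.sSup_empty]; norm_num
    · obtain ⟨s, hs⟩ := hne
      have h1 := le_csSup hbdd hs
      rw [hτS]
      linarith [hs.1]
  have hfix : ∀ x, τ ≤ x → f x < x := by
    intro x hx
    have hsup : sSup S₀ < x := by rw [hτS] at hx; linarith
    have hx1 : 1 ≤ x := le_trans hτ1 hx
    by_contra hcon
    push_neg at hcon
    exact absurd (le_csSup hbdd (⟨hx1, hcon⟩ : x ∈ S₀)) (not_le.mpr hsup)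
  -- compactness: uniform decrement on [τ, X₁]
  set X₁ : ℝ := max (max Mh 2) τ with hX₁def
  have hτX₁ : τ ≤ X₁ := le_max_right _ _
  have hcont : ∀ y ∈ Set.Icc τ X₁, ContinuousAt (fun y => y - f y) y := by
    intro y hy
    have hy1 : 1 ≤ y := le_trans hτ1 hy.1
    have h1 : ContinuousAt Real.log y := Real.continuousAt_log (by linarith)
    have h2 : ContinuousAt (fun z : ℝ => z ^ t) (Real.log y) :=
      Real.continuousAt_rpow_const _ _ (Or.inr ht0.le)
    have h3 : ContinuousAt (fun y => Real.log y ^ t) y := h2.comp h1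
    have h4 : ContinuousAt f y := by
      rw [hfdef]
      exact continuousAt_const.mul h3
    exact continuousAt_id.sub h4
  obtain ⟨m, hm, hmin⟩ := isCompact_Icc.exists_isMinOn (Set.nonempty_Icc.mpr hτX₁)
    (fun y hy => (hcont y hy).continuousWithinAt)
  set δ : ℝ := min (m - f m) 1 with hδdef
  have hδpos : 0 < δ := lt_min (sub_pos.mpr (hfix m hm.1)) one_pos
  have hdecf : ∀ y, τ < y → f y ≤ y - δ := by
    intro y hy
    by_cases hyX : y ≤ X₁
    · have h1 : m - f m ≤ y - f y := hmin (⟨hy.le, hyX⟩ : y ∈ Set.Icc τ X₁)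
      have h2 : δ ≤ m - f m := min_le_left _ _
      linarith
    · push_neg at hyX
      have h2 : max Mh 2 ≤ y := le_trans (le_max_left _ _) hyX.le
      have h3 := hhalf y h2
      have hy2 : (2:ℝ) ≤ y := le_trans (le_trans (le_max_right Mh 2) (le_max_left _ τ)) hyX.le
      have h4 : δ ≤ 1 := min_le_right _ _
      linarith
  have Tf : ∀ x, ∃ c, f^[c] x ≤ τ := stop_term hδpos hdecf
  -- decrement for g
  have hdecg : ∀ y : ℝ, (2:ℝ) < y → g y ≤ y - 1 := by
    intro y hy
    have h1 : Real.log (y/2) ≤ y/2 - 1 := Real.log_le_sub_one_of_pos (by linarith)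
    have h2 : Real.log y = Real.log (y/2) + Real.log 2 := by
      have he : y/2*2 = y := by ring
      rw [← he, Real.log_mul (by intro h; nlinarith) (by norm_num), he]
    rw [hgx, div_le_iff₀ hlog2_pos]
    nlinarith [mul_nonneg (by linarith : (0:ℝ) ≤ y - 2)
      (by linarith : (0:ℝ) ≤ Real.log 2 - 1/2)]
  have Tg : ∀ x, ∃ c, g^[c] x ≤ 2 := stop_term one_pos (fun y hy => hdecg y hy)
  -- 1 ≤ f x for large x
  set M1 : ℝ := Real.exp (max 1 γ⁻¹) with hM1def
  have hfge1 : ∀ x : ℝ, M1 ≤ x → 1 ≤ f x := by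
    intro x hx
    have hx0 : 0 < x := lt_of_lt_of_le (Real.exp_pos _) hx
    have hlog : max 1 γ⁻¹ ≤ Real.log x := (Real.le_log_iff_exp_le hx0).mpr hx
    have h1 : 1 ≤ Real.log x := le_trans (le_max_left _ _) hlog
    have h2 : Real.log x ^ (1:ℝ) ≤ Real.log x ^ t :=
      Real.rpow_le_rpow_of_exponent_le h1 ht
    rw [Real.rpow_one] at h2
    have h3 : γ⁻¹ ≤ Real.log x ^ t := le_trans (le_trans (le_max_right _ _) hlog) h2
    have h4 := mul_le_mul_of_nonneg_left h3 hγ.le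
    rw [mul_inv_cancel₀ hγ.ne'] at h4
    rw [hfx]
    exact h4
  -- upper comparison: f (f x) ≤ g x eventually
  have hUev : ∀ᶠ x in Filter.atTop, f (f x) ≤ g x := by
    have hu1 : ∀ᶠ u in Filter.atTop,
        γ * (|Real.log γ| + t) ^ t * Real.log u ^ t ≤ 1 * u :=
      ev_helper _ t 1 one_pos
    have hu2 : ∀ᶠ u in Filter.atTop, max 1 |Real.log γ| ≤ Real.log u :=
      Real.tendsto_log_atTop.eventually_ge_atTop _
    have hu3 : ∀ᶠ u in Filter.atTop, (1:ℝ) ≤ u := Filter.eventually_ge_atTop 1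
    filter_upwards [Real.tendsto_log_atTop.eventually ((hu1.and hu2).and hu3)] with x hx
    obtain ⟨⟨hb, hmaxlog⟩, hu1'⟩ := hx
    have hu0 : (0:ℝ) < Real.log x := lt_of_lt_of_le one_pos hu1'
    have hL1 : 1 ≤ Real.log (Real.log x) := le_trans (le_max_left _ _) hmaxlog
    have hLγ : |Real.log γ| ≤ Real.log (Real.log x) := le_trans (le_max_right _ _) hmaxlog
    have hut : (0:ℝ) < Real.log x ^ t := Real.rpow_pos_of_pos hu0 t
    have hlogfx : Real.log (f x) = Real.log γ + t * Real.log (Real.log x) := by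
      rw [hfx, Real.log_mul hγ.ne' (ne_of_gt hut), Real.log_rpow hu0]
    have hinner0 : 0 ≤ Real.log γ + t * Real.log (Real.log x) := by
      have h1 : -|Real.log γ| ≤ Real.log γ := neg_abs_le _
      nlinarith [mul_nonneg (by linarith : (0:ℝ) ≤ t - 1)
        (by linarith : (0:ℝ) ≤ Real.log (Real.log x))]
    have hinner_le : Real.log γ + t * Real.log (Real.log x)
        ≤ (|Real.log γ| + t) * Real.log (Real.log x) := by
      have h1 : Real.log γ ≤ |Real.log γ| := le_abs_self _
      nlinarith [mul_nonneg (abs_nonneg (Real.log γ))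
        (by linarith : (0:ℝ) ≤ Real.log (Real.log x) - 1)]
    have hffx : f (f x) = γ * (Real.log γ + t * Real.log (Real.log x)) ^ t := by
      rw [hfx (f x), hlogfx]
    have hstep : (Real.log γ + t * Real.log (Real.log x)) ^ t
        ≤ ((|Real.log γ| + t) * Real.log (Real.log x)) ^ t :=
      Real.rpow_le_rpow hinner0 hinner_le ht0.le
    have hmulr : ((|Real.log γ| + t) * Real.log (Real.log x)) ^ t
        = (|Real.log γ| + t) ^ t * Real.log (Real.log x) ^ t :=
      Real.mul_rpow (by positivity) (by linarith)
    have hgoal1 : f (f x) ≤ Real.log x := by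
      rw [hffx]
      calc γ * (Real.log γ + t * Real.log (Real.log x)) ^ t
          ≤ γ * ((|Real.log γ| + t) * Real.log (Real.log x)) ^ t :=
            mul_le_mul_of_nonneg_left hstep hγ.le
        _ = γ * (|Real.log γ| + t) ^ t * Real.log (Real.log x) ^ t := by
            rw [hmulr]; ring
        _ ≤ 1 * Real.log x := hb
        _ = Real.log x := one_mul _
    have hgoal2 : Real.log x ≤ g x := by
      rw [hgx, le_div_iff₀ hlog2_pos]
      nlinarith [mul_nonneg (by linarith : (0:ℝ) ≤ 1 - Real.log 2) hu0.le]
    linarith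
  -- lower comparison: g (g (g x)) ≤ f x eventually
  have hLev : ∀ᶠ x in Filter.atTop, g (g (g x)) ≤ f x := by
    have hu1 : ∀ᶠ u in Filter.atTop, (2:ℝ) * Real.log u ^ (1:ℝ) ≤ γ/2 * u :=
      ev_helper 2 1 (γ/2) (by positivity)
    have hu2 : ∀ᶠ u in Filter.atTop, (8/γ : ℝ) ≤ u := Filter.eventually_ge_atTop _
    have hu3 : ∀ᶠ u in Filter.atTop, (1:ℝ) ≤ Real.log u :=
      Real.tendsto_log_atTop.eventually_ge_atTop 1
    have hu4 : ∀ᶠ u in Filter.atTop, (1:ℝ) ≤ u := Filter.eventually_ge_atTop 1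
    filter_upwards [Real.tendsto_log_atTop.eventually ((hu1.and hu2).and (hu3.and hu4))]
      with x hx
    obtain ⟨⟨h1, h2⟩, h3, h4⟩ := hx
    rw [Real.rpow_one] at h1
    have hu0 : (0:ℝ) < Real.log x := by linarith
    have hc₀pos : 0 < -Real.log (Real.log 2) := by
      have : Real.log (Real.log 2) < 0 := Real.log_neg hlog2_pos hlog2_lt1
      linarith
    have hc₀lt1 : -Real.log (Real.log 2) < 1 := by
      have h5 : Real.log (1/2) < Real.log (Real.log 2) :=
        Real.log_lt_log (by norm_num) hlog2_half
      have h6 : Real.log (1/2) = -Real.log 2 := by rw [one_div, Real.log_inv]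
      linarith
    have hg1 : g x = Real.log x / Real.log 2 := hgx x
    have hnum : 0 < Real.log (Real.log x) - Real.log (Real.log 2) := by linarith
    have hg2 : g (g x) = (Real.log (Real.log x) - Real.log (Real.log 2)) / Real.log 2 := by
      rw [hgx (g x), hg1, Real.log_div (by linarith) (ne_of_gt hlog2_pos)]
    have hg3 : g (g (g x)) =
        (Real.log (Real.log (Real.log x) - Real.log (Real.log 2)) - Real.log (Real.log 2))
          / Real.log 2 := by
      rw [hgx (g (g x)), hg2,
        Real.log_div (ne_of_gt hnum) (ne_of_gt hlog2_pos)]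
    have hb1 : Real.log (Real.log (Real.log x) - Real.log (Real.log 2))
        ≤ Real.log (Real.log x) + 1 := by
      have := Real.log_le_sub_one_of_pos hnum
      linarith
    have hb2 : g (g (g x)) ≤ (Real.log (Real.log x) + 2) / Real.log 2 := by
      rw [hg3]
      exact (div_le_div_iff_of_pos_right hlog2_pos).mpr (by linarith)
    have hb3 : (Real.log (Real.log x) + 2) / Real.log 2 ≤ 2 * (Real.log (Real.log x) + 2) := by
      rw [div_le_iff₀ hlog2_pos]
      nlinarith [mul_nonneg (by linarith : (0:ℝ) ≤ Real.log (Real.log x) + 2)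
        (by linarith : (0:ℝ) ≤ 2 * Real.log 2 - 1)]
    have hb4 : 2 * (Real.log (Real.log x) + 2) ≤ γ * Real.log x := by
      have h7 : (4:ℝ) ≤ γ/2 * Real.log x := by
        have h8 := mul_le_mul_of_nonneg_left h2 (le_of_lt (half_pos hγ))
        have h9 : γ/2 * (8/γ) = 4 := by field_simp; ring
        linarith
      linarith
    have hb5 : γ * Real.log x ≤ f x := by
      rw [hfx]
      have h8 : Real.log x ^ (1:ℝ) ≤ Real.log x ^ t :=
        Real.rpow_le_rpow_of_exponent_le h4 ht
      rw [Real.rpow_one] at h8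
      exact mul_le_mul_of_nonneg_left h8 hγ.le
    linarith
  -- extract thresholds
  obtain ⟨MU, hMU⟩ := Filter.eventually_atTop.mp hUev
  obtain ⟨ML, hML⟩ := Filter.eventually_atTop.mp hLev
  set B : ℝ := max (max MU M1) (max (τ + 1) 3) with hBdef
  set B' : ℝ := max (max ML M1) (max (τ + 1) 3) with hB'def
  have hB3 : (3:ℝ) ≤ B := le_trans (le_max_right _ _) (le_max_right _ _)
  have hBτ : τ + 1 ≤ B := le_trans (le_max_left _ _) (le_max_right _ _)
  have hB'3 : (3:ℝ) ≤ B' := le_trans (le_max_right _ _) (le_max_right _ _)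
  have hB'τ : τ + 1 ≤ B' := le_trans (le_max_left _ _) (le_max_right _ _)
  have hB1 : (1:ℝ) ≤ B := by linarith
  have hB'1 : (1:ℝ) ≤ B' := by linarith
  have hMUB : MU ≤ B := le_trans (le_max_left _ _) (le_max_left _ _)
  have hMLB' : ML ≤ B' := le_trans (le_max_left _ _) (le_max_left _ _)
  have hM1B : M1 ≤ B := le_trans (le_max_right _ _) (le_max_left _ _)
  have hM1B' : M1 ≤ B' := le_trans (le_max_right _ _) (le_max_left _ _)
  set K : ℕ := max (NN f τ B) 2 with hKdef
  set K' : ℕ := max (NN g 2 B') 3 with hK'def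
  -- upper bound induction
  have baseU : ∀ x : ℝ, 1 ≤ x → x ≤ B → NN f τ x ≤ 2 * NN g 2 x + K := by
    intro x hx1 hxB
    have h1 : NN f τ x ≤ NN f τ B := NN_mono hτ1 fmono hx1 hxB (Tf B)
    have h2 : NN f τ B ≤ K := le_max_left _ _
    omega
  have baseL : ∀ x : ℝ, 1 ≤ x → x ≤ B' → NN g 2 x ≤ 3 * NN f τ x + K' := by
    intro x hx1 hxB
    have h1 : NN g 2 x ≤ NN g 2 B' := NN_mono (by norm_num) gmono hx1 hxB (Tg B')
    have h2 : NN g 2 B' ≤ K' := le_max_left _ _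
    omega
  have upper : ∀ n : ℕ, ∀ x : ℝ, 1 ≤ x → NN g 2 x ≤ n → NN f τ x ≤ 2 * NN g 2 x + K := by
    intro n
    induction n with
    | zero =>
      intro x hx1 hn
      by_cases hxB : x ≤ B
      · exact baseU x hx1 hxB
      · exfalso
        push_neg at hxB
        have h2 : (2:ℝ) < x := by linarith
        have := NN_pos h2 (Tg x)
        omega
    | succ n ih =>
      intro x hx1 hn
      by_cases hxB : x ≤ B
      · exact baseU x hx1 hxB
      · push_neg at hxB
        have hx2 : (2:ℝ) < x := by linarith
        have hxτ : τ < x := by linarith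
        have hs : NN f τ x ≤ NN f τ (f^[2] x) + 2 := NN_shift 2 (Tf _)
        have hff : f^[2] x = f (f x) := by
          rw [show (2:ℕ) = 1 + 1 from rfl, Function.iterate_add_apply, Function.iterate_one]
        rw [hff] at hs
        by_cases hff1 : f (f x) ≤ τ
        · have h0 : NN f τ (f (f x)) = 0 := NN_zero hff1
          have hK2 : 2 ≤ K := le_max_right _ _
          omega
        · push_neg at hff1
          have hffge1 : 1 ≤ f (f x) := le_trans hτ1 hff1.le
          have hUx : f (f x) ≤ g x := hMU x (by linarith)
          have h1 : NN f τ (f (f x)) ≤ NN f τ (g x) := NN_mono hτ1 fmono hffge1 hUx (Tf _)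
          have hgx1 : 1 ≤ g x := by
            rw [hgx, le_div_iff₀ hlog2_pos]
            have := Real.log_le_log two_pos hx2.le
            linarith
          have hrec : NN g 2 (g x) + 1 ≤ NN g 2 x := NN_rec_le hx2 (Tg x)
          have hihyp : NN g 2 (g x) ≤ n := by omega
          have h2 := ih (g x) hgx1 hihyp
          omega
  -- lower bound induction
  have lower : ∀ n : ℕ, ∀ x : ℝ, 1 ≤ x → NN f τ x ≤ n → NN g 2 x ≤ 3 * NN f τ x + K' := by
    intro n
    induction n with
    | zero =>
      intro x hx1 hn
      by_cases hxB : x ≤ B'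
      · exact baseL x hx1 hxB
      · exfalso
        push_neg at hxB
        have hxτ : τ < x := by linarith
        have := NN_pos hxτ (Tf x)
        omega
    | succ n ih =>
      intro x hx1 hn
      by_cases hxB : x ≤ B'
      · exact baseL x hx1 hxB
      · push_neg at hxB
        have hxτ : τ < x := by linarith
        by_cases hg3 : g^[3] x ≤ 2
        · have h1 : NN g 2 x ≤ 3 := NN_le hg3
          have h2 : 3 ≤ K' := le_max_right _ _
          omega
        · push_neg at hg3
          have hgg : g^[3] x = g (g (g x)) := by
            rw [show (3:ℕ) = 1 + (1 + 1) from rfl, Function.iterate_add_apply,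
              Function.iterate_add_apply, Function.iterate_one]
          rw [hgg] at hg3
          have hshift : NN g 2 x ≤ NN g 2 (g^[3] x) + 3 := NN_shift 3 (Tg _)
          rw [hgg] at hshift
          have hLx : g (g (g x)) ≤ f x := hML x (by linarith)
          have h1 : NN g 2 (g (g (g x))) ≤ NN g 2 (f x) :=
            NN_mono (by norm_num) gmono (by linarith) hLx (Tg _)
          have hfx1 : 1 ≤ f x := hfge1 x (by linarith)
          have hrecf : NN f τ (f x) + 1 ≤ NN f τ x := NN_rec_le hxτ (Tf x)
          have h2 := ih (f x) hfx1 (by omega)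
          omega
  -- assembly
  refine ⟨((3:ℝ) + K')⁻¹, (2:ℝ) + K, max B B', by positivity, by positivity, ?_⟩
  intro x hXx
  have hxB : B ≤ x := le_trans (le_max_left _ _) hXx
  have hxB' : B' ≤ x := le_trans (le_max_right _ _) hXx
  have hx1 : (1:ℝ) ≤ x := by linarith
  have hx2 : (2:ℝ) < x := by linarith
  have hxτ : τ < x := by linarith
  have hsetEq : {c : ℕ | 1 ≤ c ∧ f^[c] x ≤ τ} = {c : ℕ | f^[c] x ≤ τ} := by
    ext c
    simp only [Set.mem_setOf_eq]
    constructor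
    · rintro ⟨_, h⟩; exact h
    · intro h
      refine ⟨?_, h⟩
      rcases Nat.eq_zero_or_pos c with rfl | hc
      · exfalso
        simp only [Function.iterate_zero_apply] at h
        linarith
      · exact hc
  have hfStar : fStar f x = NN f τ x := by
    rw [fStar, ← hτdef, if_pos hxτ, hsetEq]
    rfl
  have hlogStar : logStar x = NN g 2 x := rfl
  have hNf1 : 1 ≤ NN f τ x := NN_pos hxτ (Tf x)
  have hNg1 : 1 ≤ NN g 2 x := NN_pos hx2 (Tg x)
  have hup := upper (NN g 2 x) x hx1 le_rfl
  have hlo := lower (NN f τ x) x hx1 le_rfl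
  have hupN : NN f τ x ≤ (2 + K) * NN g 2 x := by
    have h : K ≤ K * NN g 2 x := Nat.le_mul_of_pos_right _ hNg1
    calc NN f τ x ≤ 2 * NN g 2 x + K := hup
      _ ≤ 2 * NN g 2 x + K * NN g 2 x := Nat.add_le_add_left h _
      _ = (2 + K) * NN g 2 x := by ring
  have hloN : NN g 2 x ≤ (3 + K') * NN f τ x := by
    have h : K' ≤ K' * NN f τ x := Nat.le_mul_of_pos_right _ hNf1
    calc NN g 2 x ≤ 3 * NN f τ x + K' := hlo
      _ ≤ 3 * NN f τ x + K' * NN f τ x := Nat.add_le_add_left h _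
      _ = (3 + K') * NN f τ x := by ring
  constructor
  · rw [hfStar, hlogStar]
    have hcast : (NN g 2 x : ℝ) ≤ (3 + (K' : ℝ)) * (NN f τ x : ℝ) := by
      exact_mod_cast hloN
    calc ((3:ℝ) + K')⁻¹ * (NN g 2 x : ℝ)
        ≤ ((3:ℝ) + K')⁻¹ * ((3 + (K' : ℝ)) * (NN f τ x : ℝ)) :=
          mul_le_mul_of_nonneg_left hcast (by positivity)
      _ = (NN f τ x : ℝ) := by
          have hne : (3:ℝ) + (K' : ℝ) ≠ 0 := by positivity
          field_simp
  · rw [hfStar, hlogStar]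
    exact_mod_cast hupN
end

section
/- Let i, j be links (pairs of points in a metric space) with lengths l_i, l_j and sensitivities 𝔩_i ≤ 𝔩_j, and let f be a positive function. If d_{ij}·d_{ji} ≤ 𝔩_i·𝔩_j·f(𝔩_j/𝔩_i) (the links are adjacent in G_f), then d_{ij} + d_{ji} ≤ l_i + l_j + 2·√(𝔩_i·𝔩_j·f(𝔩_j/𝔩_i)). -/
/-- Lemma: adjacent links are close: if links `i, j` with
sensitivities `Li ≤ Lj` are adjacent in `G_f`, i.e.
`d_{ij}·d_{ji} ≤ Li·Lj·f(Lj/Li)`, then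
`d_{ij} + d_{ji} ≤ l_i + l_j + 2√(Li·Lj·f(Lj/Li))`. -/
theorem stmt3 {X : Type*} [MetricSpace X]
    (si ri sj rj : X) (Li Lj : ℝ) (f : ℝ → ℝ)
    (hfpos : ∀ x : ℝ, 0 < f x)
    (hLi : 0 < Li) (hLL : Li ≤ Lj)
    (hadj : dist si rj * dist sj ri ≤ Li * Lj * f (Lj / Li)) :
    dist si rj + dist sj ri ≤
      dist si ri + dist sj rj + 2 * Real.sqrt (Li * Lj * f (Lj / Li)) := by
  set a := dist si rj with ha
  set b := dist sj ri with hb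
  have hmin : min a b ≤ Real.sqrt (Li * Lj * f (Lj / Li)) := by
    have h1 : min a b ≤ Real.sqrt (a * b) := by
      rcases le_total a b with h | h
      · rw [min_eq_left h]
        calc a = Real.sqrt (a * a) := (Real.sqrt_mul_self dist_nonneg).symm
        _ ≤ Real.sqrt (a * b) :=
          Real.sqrt_le_sqrt (mul_le_mul_of_nonneg_left h dist_nonneg)
      · rw [min_eq_right h]
        calc b = Real.sqrt (b * b) := (Real.sqrt_mul_self dist_nonneg).symm
        _ ≤ Real.sqrt (a * b) :=
          Real.sqrt_le_sqrt (mul_le_mul_of_nonneg_right h dist_nonneg)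
    exact h1.trans (Real.sqrt_le_sqrt hadj)
  rcases le_total a b with h | h
  · have tb : b ≤ dist sj rj + dist rj si + dist si ri := dist_triangle4 sj rj si ri
    have : min a b = a := min_eq_left h
    rw [dist_comm rj si] at tb
    nlinarith
  · have ta : a ≤ dist si ri + dist ri sj + dist sj rj := dist_triangle4 si ri sj rj
    have : min a b = b := min_eq_right h
    rw [dist_comm ri sj] at ta
    nlinarith
end

section
/- Let f be a nondecreasing positive function satisfying f(x) ≤ γ·x for a constant γ > 2 and all x ≥ 1. Let i, j be links with 𝔩_i ≥ 𝔩_j that are independent in G_f, i.e., d_{ij}·d_{ji} > 𝔩_i·𝔩_j·f(𝔩_i/𝔩_j), and assume 𝔩_i ≥ 4l_i and 𝔩_j ≥ 4l_j. Then the minimum distance between the links satisfies d(i,j) > (1/(√(γ+1)+1))·𝔩_j·f(𝔩_i/𝔩_j) − l_j. -/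
set_option maxHeartbeats 1000000 in
/-- Lemma: independent links are far apart: let `f` be
nondecreasing, positive, with `f x ≤ γ x` for `x ≥ 1` (`γ > 2`).  If links
`i, j` with `Li ≥ Lj`, `L_t ≥ 4 l_t`, are independent in `G_f`, i.e.
`d_{ij}·d_{ji} > Li·Lj·f(Li/Lj)`, then the minimum cross distance satisfies
`d(i,j) > (1/(√(γ+1)+1))·Lj·f(Li/Lj) − l_j`. -/
theorem stmt5 {X : Type*} [MetricSpace X]
    (si ri sj rj : X) (Li Lj : ℝ) (γ : ℝ) (f : ℝ → ℝ)
    (hγ : 2 < γ)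
    (hfmono : Monotone f) (hfpos : ∀ x : ℝ, 0 < f x)
    (hflin : ∀ x : ℝ, 1 ≤ x → f x ≤ γ * x)
    (hLL : Lj ≤ Li)
    (hsi : 4 * dist si ri ≤ Li) (hsj : 4 * dist sj rj ≤ Lj)
    (hLj : 0 < Lj)
    (hind : dist si rj * dist sj ri > Li * Lj * f (Li / Lj)) :
    min (min (dist si sj) (dist si rj)) (min (dist ri sj) (dist ri rj)) >
      (1 / (Real.sqrt (γ + 1) + 1)) * Lj * f (Li / Lj) - dist sj rj := by
  set li := dist si ri with hli_def
  set lj := dist sj rj with hlj_def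
  set a := dist si sj with ha_def
  set b := dist si rj with hb_def
  set c := dist ri sj with hc_def
  set d := dist ri rj with hd_def
  set D := min (min a b) (min c d) with hD_def
  have hli0 : (0:ℝ) ≤ li := dist_nonneg
  have hlj0 : (0:ℝ) ≤ lj := dist_nonneg
  have ha0 : (0:ℝ) ≤ a := dist_nonneg
  have hb0 : (0:ℝ) ≤ b := dist_nonneg
  have hc0 : (0:ℝ) ≤ c := dist_nonneg
  have hd0 : (0:ℝ) ≤ d := dist_nonneg
  have hD0 : (0:ℝ) ≤ D :=
    le_min (le_min ha0 hb0) (le_min hc0 hd0)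
  have hcomm : dist sj ri = c := by rw [hc_def, dist_comm]
  -- triangle inequalities
  have t1 : b ≤ a + lj := dist_triangle si sj rj
  have t2 : c ≤ a + li := by
    rw [hc_def, dist_comm ri sj]
    calc dist sj ri ≤ dist sj si + dist si ri := dist_triangle _ _ _
    _ = a + li := by rw [dist_comm sj si]
  have t3 : c ≤ lj + b + li := by
    rw [hc_def, dist_comm ri sj]
    calc dist sj ri ≤ dist sj rj + dist rj si + dist si ri := dist_triangle4 _ _ _ _
    _ = lj + b + li := by rw [dist_comm rj si]
  have t4 : b ≤ li + c + lj := by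
    calc b ≤ dist si ri + dist ri sj + dist sj rj := dist_triangle4 _ _ _ _
    _ = li + c + lj := rfl
  have t6 : b ≤ li + d := dist_triangle si ri rj
  have t7 : c ≤ lj + d := by
    rw [hc_def, dist_comm ri sj]
    calc dist sj ri ≤ dist sj rj + dist rj ri := dist_triangle _ _ _
    _ = lj + d := by rw [dist_comm rj ri]
  -- the key product bound
  have key : b * c ≤ (D + li) * (D + lj) := by
    have hDval : D = a ∨ D = b ∨ D = c ∨ D = d := by
      rcases min_cases (min a b) (min c d) with ⟨h1, _⟩ | ⟨h1, _⟩ <;>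
        [rcases min_cases a b with ⟨h2, _⟩ | ⟨h2, _⟩;
         rcases min_cases c d with ⟨h2, _⟩ | ⟨h2, _⟩] <;>
        rw [hD_def, h1, h2] <;> tauto
    have hDa : D ≤ a := le_trans (min_le_left _ _) (min_le_left _ _)
    have hDb : D ≤ b := le_trans (min_le_left _ _) (min_le_right _ _)
    have hDc : D ≤ c := le_trans (min_le_right _ _) (min_le_left _ _)
    have hDd : D ≤ d := le_trans (min_le_right _ _) (min_le_right _ _)
    rcases hDval with h | h | h | h
    · rw [h]
      calc b * c ≤ (a + lj) * (a + li) :=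
            mul_le_mul t1 t2 hc0 (by linarith)
        _ = (a + li) * (a + lj) := by ring
    · rw [h]
      calc b * c ≤ b * (lj + b + li) := mul_le_mul_of_nonneg_left t3 hb0
        _ ≤ (b + li) * (b + lj) := by nlinarith [mul_nonneg hli0 hlj0]
    · rw [h]
      calc b * c ≤ (li + c + lj) * c := mul_le_mul_of_nonneg_right t4 hc0
        _ ≤ (c + li) * (c + lj) := by nlinarith [mul_nonneg hli0 hlj0]
    · rw [h]
      calc b * c ≤ (li + d) * (lj + d) :=
            mul_le_mul t6 t7 hc0 (by linarith)
        _ = (d + li) * (d + lj) := by ring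
  -- basic positivity facts
  have hLi : 0 < Li := lt_of_lt_of_le hLj hLL
  have hx1 : (1:ℝ) ≤ Li / Lj := (one_le_div hLj).2 hLL
  set F := f (Li / Lj) with hF_def
  have hF : 0 < F := hfpos _
  have hFle : Lj * F ≤ γ * Li := by
    have h := hflin _ hx1
    have hdiv : Lj * (Li / Lj) = Li := by field_simp
    nlinarith
  set s := Real.sqrt (γ + 1) with hs_def
  have hs2 : s ^ 2 = γ + 1 := Real.sq_sqrt (by linarith)
  have hs0 : (0:ℝ) ≤ s := Real.sqrt_nonneg _
  have hsp : (0:ℝ) < s + 1 := by linarith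
  set k := 1 / (s + 1) with hk_def
  have hk0 : 0 < k := by positivity
  have hkineq : k ^ 2 * γ + k / 4 ≤ 1 := by
    rw [hk_def, show (1/(s+1))^2*γ + (1/(s+1))/4 = (γ + (s+1)/4)/(s+1)^2 by
      field_simp]
    rw [div_le_one (by positivity), add_sq]
    linarith
  -- contradiction argument
  by_contra hcon
  push_neg at hcon
  have h1 : D + lj ≤ k * Lj * F := by linarith
  have h2 : D + li ≤ k * Lj * F + li := by linarith
  have hkLF : 0 ≤ k * Lj * F := by positivity
  have hprod2 : (D + li) * (D + lj) ≤ (k * Lj * F + li) * (k * Lj * F) :=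
    mul_le_mul h2 h1 (by linarith) (by linarith)
  have hlitop : li ≤ Li / 4 := by linarith
  have e1 : k^2 * (Lj*F) * (Lj*F) ≤ k^2 * (γ*Li) * (Lj*F) := by
    have : 0 ≤ k^2 * (Lj*F) := by positivity
    nlinarith
  have e2 : li * (k * (Lj*F)) ≤ (Li/4) * (k * (Lj*F)) := by
    have : 0 ≤ k * (Lj*F) := by positivity
    nlinarith
  have e3 : (k^2*γ + k/4) * (Li*(Lj*F)) ≤ 1 * (Li*(Lj*F)) := by
    have : 0 ≤ Li*(Lj*F) := by positivity
    nlinarith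
  have hfin : (k * Lj * F + li) * (k * Lj * F) ≤ Li * Lj * F := by nlinarith
  have hchain : Li * Lj * F < Li * Lj * F := by
    calc Li * Lj * F < b * dist sj ri := hind
      _ = b * c := by rw [hcomm]
      _ ≤ (D + li) * (D + lj) := key
      _ ≤ (k * Lj * F + li) * (k * Lj * F) := hprod2
      _ ≤ Li * Lj * F := hfin
  exact lt_irrefl _ hchain
end

section
/- Let α ≥ 1 and c > 1 be reals. For links arranged consecutively on the real line with lengths l_t satisfying l_{t+1} ≥ c·l_t and with link t occupying the interval [∑_{j<t} l_j, ∑_{j≤t} l_j], the set of odd-indexed links S = {1, 3, 5, ...} satisfies: for every link 2k+1 ∈ S, the sum ∑_{j ∈ S, j < 2k+1} (l_j / d(j, 2k+1))^α < ∑_{t=1}^{∞} c^{−tα}, where d(j, i) is the distance between the nearest endpoints of links j and i. -/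
lemma stmt10_growth (c : ℝ) (hc : 1 < c) (n : ℕ) (l : ℕ → ℝ)
    (hgrow : ∀ t : ℕ, 1 ≤ t → t + 1 ≤ n → c * l t ≤ l (t + 1)) :
    ∀ m j : ℕ, 1 ≤ j → j + m ≤ n → c ^ m * l j ≤ l (j + m) := by
  intro m
  induction m with
  | zero => intro j _ _; simp
  | succ m ih =>
      intro j hj hjm
      have h1 : c ^ m * l j ≤ l (j + m) := ih j hj (by omega)
      have h2 : c * l (j + m) ≤ l (j + m + 1) := hgrow (j + m) (by omega) (by omega)
      have hc0 : (0:ℝ) < c := lt_trans one_pos hc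
      calc c ^ (m + 1) * l j = c * (c ^ m * l j) := by ring
        _ ≤ c * l (j + m) := by nlinarith
        _ ≤ l (j + m + 1) := h2
        _ = l (j + (m + 1)) := by ring_nf

/-- links arranged end to end on the real line, lengths growing
geometrically with ratio `c > 1`; link `t` occupies `[∑_{j<t} l_j, ∑_{j≤t} l_j]`,
so for `j < i` the gap is `d(j,i) = ∑_{t=j+1}^{i−1} l_t`.  For the odd-indexed
links and any link `2k+1 ≤ n`:
`∑_{odd j < 2k+1} (l_j / d(j, 2k+1))^α < ∑_{t=1}^∞ c^{−tα}`. -/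
theorem stmt10 (α c : ℝ) (hα : 1 ≤ α) (hc : 1 < c) (n : ℕ) (l : ℕ → ℝ)
    (hpos : ∀ t : ℕ, 1 ≤ t → t ≤ n → 0 < l t)
    (hgrow : ∀ t : ℕ, 1 ≤ t → t + 1 ≤ n → c * l t ≤ l (t + 1))
    (k : ℕ) (hk : 2 * k + 1 ≤ n) :
    ∑ j ∈ (Finset.range (2 * k + 1)).filter (fun j => Odd j),
        (l j / ∑ t ∈ Finset.Icc (j + 1) (2 * k), l t) ^ α
      < ∑' t : ℕ, c ^ (-(((t : ℝ) + 1) * α)) := by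
  have hc0 : (0:ℝ) < c := lt_trans one_pos hc
  set r : ℝ := c ^ (-α : ℝ) with hr
  have hr0 : 0 < r := Real.rpow_pos_of_pos hc0 _
  have hr1 : r < 1 :=
    Real.rpow_lt_one_of_one_lt_of_neg hc (by linarith)
  -- the tsum is a geometric series
  have hfun : ∀ t : ℕ, c ^ (-(((t : ℝ) + 1) * α)) = r ^ (t + 1) := by
    intro t
    rw [hr, ← Real.rpow_natCast (c ^ (-α : ℝ)) (t + 1), ← Real.rpow_mul hc0.le]
    push_cast
    ring_nf
  have hsum : Summable (fun t : ℕ => r ^ (t + 1)) := by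
    have := (summable_geometric_of_lt_one hr0.le hr1).mul_left r
    refine this.congr fun t => by ring
  set g : ℕ → ℝ := fun t => r ^ (t + 1) with hg
  have htsum : ∑' t : ℕ, c ^ (-(((t : ℝ) + 1) * α)) = ∑' t : ℕ, g t :=
    tsum_congr hfun
  rw [htsum]
  set F := (Finset.range (2 * k + 1)).filter (fun j => Odd j) with hF
  -- each odd j in F satisfies 1 ≤ j ≤ 2k-1
  have hjF : ∀ j ∈ F, 1 ≤ j ∧ j + 1 ≤ 2 * k := by
    intro j hj
    rw [hF, Finset.mem_filter, Finset.mem_range] at hj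
    obtain ⟨hjlt, x, hx⟩ := hj.2, hj.2
    omega
  -- termwise bound
  have hterm : ∀ j ∈ F, (l j / ∑ t ∈ Finset.Icc (j + 1) (2 * k), l t) ^ α
      ≤ g (2 * k - 1 - j) := by
    intro j hj
    obtain ⟨hj1, hj2⟩ := hjF j hj
    set m := 2 * k - j with hm
    set D := ∑ t ∈ Finset.Icc (j + 1) (2 * k), l t with hD
    have hmem : ∀ t ∈ Finset.Icc (j + 1) (2 * k), 0 < l t := by
      intro t ht
      rw [Finset.mem_Icc] at ht
      exact hpos t (by omega) (by omega)
    have hgrowth : c ^ m * l j ≤ l (j + m) :=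
      stmt10_growth c hc n l hgrow m j hj1 (by omega)
    have hjm : j + m = 2 * k := by omega
    have h2k : l (2 * k) ≤ D := by
      rw [hD]
      refine Finset.single_le_sum (fun t ht => (hmem t ht).le) ?_
      rw [Finset.mem_Icc]; omega
    have hlj : 0 < l j := hpos j hj1 (by omega)
    have hcm : (0:ℝ) < c ^ m := pow_pos hc0 m
    have hDpos : 0 < D := lt_of_lt_of_le (by positivity) (hjm ▸ hgrowth |>.trans h2k)
    have hdiv : l j / D ≤ (c ^ m)⁻¹ := by
      rw [div_le_iff₀ hDpos]
      rw [inv_mul_eq_div, le_div_iff₀ hcm]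
      calc l j * c ^ m = c ^ m * l j := by ring
        _ ≤ l (j + m) := hgrowth
        _ = l (2 * k) := by rw [hjm]
        _ ≤ D := h2k
    have hrpow : (l j / D) ^ α ≤ ((c ^ m)⁻¹) ^ α :=
      Real.rpow_le_rpow (by positivity) hdiv (by linarith)
    have heq : ((c ^ m)⁻¹ : ℝ) ^ α = r ^ m := by
      rw [hr, ← Real.rpow_natCast c m, ← Real.rpow_neg hc0.le,
        ← Real.rpow_natCast (c ^ (-α : ℝ)) m, ← Real.rpow_mul hc0.le,
        ← Real.rpow_mul hc0.le]
      ring_nf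
    have hidx : 2 * k - 1 - j + 1 = m := by omega
    rw [hg]
    simp only [hidx]
    exact heq ▸ hrpow
  have h1 : ∑ j ∈ F, (l j / ∑ t ∈ Finset.Icc (j + 1) (2 * k), l t) ^ α
      ≤ ∑ j ∈ F, g (2 * k - 1 - j) := Finset.sum_le_sum hterm
  -- reindex as a sum of g over an injective image
  set S := F.image (fun j => 2 * k - 1 - j) with hS
  have hinj : ∀ a ∈ F, ∀ b ∈ F, 2 * k - 1 - a = 2 * k - 1 - b → a = b := by
    intro a ha b hb hab
    obtain ⟨ha1, ha2⟩ := hjF a ha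
    obtain ⟨hb1, hb2⟩ := hjF b hb
    omega
  have h2 : ∑ j ∈ F, g (2 * k - 1 - j) = ∑ i ∈ S, g i := by
    rw [hS, Finset.sum_image hinj]
  have h1notS : 1 ∉ S := by
    rw [hS]
    simp only [Finset.mem_image, not_exists]
    rintro j ⟨hj, hj1⟩
    obtain ⟨hja, hjb⟩ := hjF j hj
    rw [hF, Finset.mem_filter] at hj
    obtain ⟨_, x, hx⟩ := hj
    omega
  have h3 : ∑ i ∈ S, g i < ∑ i ∈ insert 1 S, g i := by
    rw [Finset.sum_insert h1notS]
    have : 0 < g 1 := by positivity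
    linarith
  have h4 : ∑ i ∈ insert 1 S, g i ≤ ∑' t : ℕ, g t := by
    refine Summable.sum_le_tsum _ (fun i _ => ?_) hsum
    positivity
  calc ∑ j ∈ F, (l j / ∑ t ∈ Finset.Icc (j + 1) (2 * k), l t) ^ α
      ≤ ∑ j ∈ F, g (2 * k - 1 - j) := h1
    _ = ∑ i ∈ S, g i := h2
    _ < ∑ i ∈ insert 1 S, g i := h3
    _ ≤ ∑' t : ℕ, g t := h4
end

section
/- Let g : [1, ∞) → [1, ∞) be increasing with g(x) < x for all x ≥ x_0 (some x_0 ≥ 1), and g(x) → ∞. Define a sequence l_1 ≥ x_0 and l_{t+1} = min{y : g(y) ≥ c·l_t} for a constant c ≥ 2. If g(l_{t+1}/2) < 2·l_t for all t (equivalently h(l_{t+1}/2) < l_t/2 with h(x) = g(x)/4), then n = Ω(h*(l_n/2)), where h* is the iterated-star function of h; i.e., the number of terms needed to reach diversity Δ = l_n/l_1 is at least of order g*(Δ). -/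
/-- `iterStar h b x`: minimal number of iterations of `h` needed to bring `x`
at or below the threshold `b`. -/
noncomputable def iterStar (h : ℝ → ℝ) (b x : ℝ) : ℕ :=
  sInf {k : ℕ | h^[k] x ≤ b}

/-- for an increasing, unbounded `g` with `g x < x` for
`x ≥ x₀`, and the sequence `l_1 ≥ x₀`, `l_{t+1} = min{y : g y ≥ c·l_t}`
(`c ≥ 2`), if `g(l_{t+1}/2) < 2·l_t` for all `t`, then
`n = Ω(h*(l_n/2))` where `h x = g x / 4`. -/
theorem stmt11 (g : ℝ → ℝ) (x₀ : ℝ) (hx₀ : 1 ≤ x₀)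
    (hmono : StrictMonoOn g (Set.Ici 1))
    (hsub : ∀ x : ℝ, x₀ ≤ x → g x < x)
    (hto : Filter.Tendsto g Filter.atTop Filter.atTop)
    (hrange : ∀ x : ℝ, 1 ≤ x → 1 ≤ g x)
    (c : ℝ) (hc : 2 ≤ c)
    (l : ℕ → ℝ) (hl1 : x₀ ≤ l 1)
    (hrec : ∀ t : ℕ, 1 ≤ t → l (t + 1) = sInf {y : ℝ | c * l t ≤ g y})
    (hcond : ∀ t : ℕ, 1 ≤ t → g (l (t + 1) / 2) < 2 * l t) :
    ∃ b C : ℝ, 0 < C ∧ ∀ n : ℕ, 1 ≤ n →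
      C * (iterStar (fun x => g x / 4) b (l n / 2) : ℝ) ≤ (n : ℝ) := by
  set h : ℝ → ℝ := fun x => g x / 4 with hh
  set b : ℝ := max (l 1 / 2) 1 with hb
  refine ⟨b, 1, one_pos, ?_⟩
  have key : ∀ t : ℕ, 1 ≤ t → ∀ x : ℝ, x ≤ l t / 2 →
      ∃ k : ℕ, k ≤ t - 1 ∧ h^[k] x ≤ b := by
    intro t ht
    induction t, ht using Nat.le_induction with
    | base =>
      intro x hx
      exact ⟨0, le_refl _, le_trans hx (le_max_left _ _)⟩
    | succ t ht ih =>
      intro x hx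
      by_cases hxb : x ≤ b
      · exact ⟨0, Nat.zero_le _, hxb⟩
      · push_neg at hxb
        have hx1 : (1 : ℝ) ≤ x := le_of_lt (lt_of_le_of_lt (le_max_right _ _) hxb)
        have hl1' : (1 : ℝ) ≤ l (t + 1) / 2 := le_trans hx1 hx
        have hgx : g x ≤ g (l (t + 1) / 2) := by
          rcases eq_or_lt_of_le hx with h' | h'
          · rw [h']
          · exact le_of_lt (hmono hx1 hl1' h')
        have hhx : h x ≤ l t / 2 := by
          have := hcond t ht
          have : g x < 2 * l t := lt_of_le_of_lt hgx this
          simp only [hh]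
          linarith
        obtain ⟨k, hk, hkb⟩ := ih (h x) hhx
        refine ⟨k + 1, ?_, ?_⟩
        · omega
        · rw [Function.iterate_succ_apply]
          exact hkb
  intro n hn
  obtain ⟨k, hk, hkb⟩ := key n hn (l n / 2) le_rfl
  have hstar : iterStar h b (l n / 2) ≤ k := Nat.sInf_le hkb
  have : iterStar h b (l n / 2) ≤ n := le_trans hstar (le_trans hk (Nat.sub_le _ _))
  calc (1 : ℝ) * (iterStar h b (l n / 2) : ℝ) = (iterStar h b (l n / 2) : ℝ) := one_mul _
    _ ≤ (n : ℝ) := Nat.cast_le.mpr this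
end

section
/- Let links i, j satisfy 𝔩_i ≥ 𝔩_j with 𝔩_t ≥ 4l_t, and suppose they are independent in G_1, i.e., d_{ij}·d_{ji} ≥ 𝔩_i·𝔩_j ≥ 16·l_i·l_j. Then d(i,j) ≥ 3·l_j, i.e., the minimum distance between the two links is at least three times the shorter link's length. -/
set_option maxHeartbeats 1000000 in
/-- if links `i, j` with sensitivities `Li ≥ Lj ≥ 4·l_j`,
`Li ≥ 4·l_i`, are independent in `G₁`, i.e. `d_{ij}·d_{ji} ≥ Li·Lj`, then
the minimum cross distance satisfies `d(i,j) ≥ 3·l_j`. -/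
theorem stmt15 {X : Type*} [MetricSpace X] (si ri sj rj : X) (Li Lj : ℝ)
    (hLj : 0 < Lj) (hLL : Lj ≤ Li)
    (hsi : 4 * dist si ri ≤ Li) (hsj : 4 * dist sj rj ≤ Lj)
    (hind : dist si rj * dist sj ri ≥ Li * Lj) :
    min (min (dist si sj) (dist si rj)) (min (dist ri sj) (dist ri rj)) ≥
      3 * dist sj rj := by
  have ha : (0:ℝ) ≤ dist si ri := dist_nonneg
  have hb : (0:ℝ) ≤ dist sj rj := dist_nonneg
  have hp : (0:ℝ) ≤ dist si rj := dist_nonneg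
  have hq : (0:ℝ) ≤ dist sj ri := dist_nonneg
  have h1 : dist si rj ≤ dist si sj + dist sj rj := dist_triangle si sj rj
  have h2 : dist sj ri ≤ dist si sj + dist si ri := by
    have := dist_triangle sj si ri; rwa [dist_comm sj si] at this
  have h3 : dist si rj ≤ dist si ri + dist ri rj := dist_triangle si ri rj
  have h4 : dist sj ri ≤ dist sj rj + dist ri rj := by
    have := dist_triangle sj rj ri; rwa [dist_comm rj ri] at this
  have h5 : dist sj ri ≤ dist sj rj + dist si rj + dist si ri := by
    have := dist_triangle4 sj rj si ri
    rwa [dist_comm rj si] at this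
  have h6 : dist si rj ≤ dist si ri + dist ri sj + dist sj rj := dist_triangle4 si ri sj rj
  have h7 : dist sj ri ≤ dist ri sj := le_of_eq (dist_comm sj ri)
  rcases eq_or_lt_of_le hb with hb0 | hb0
  · have : (0:ℝ) ≤ min (min (dist si sj) (dist si rj)) (min (dist ri sj) (dist ri rj)) := by
      positivity
    linarith
  have key1 : 16 * (dist sj rj * dist sj rj) ≤ Li * Lj := by nlinarith
  have key2 : 16 * (dist si ri * dist sj rj) ≤ Li * Lj := by nlinarith
  refine le_min (le_min ?_ ?_) (le_min ?_ ?_)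
  · have hm : dist si rj * dist sj ri ≤ (dist si sj + dist sj rj) * (dist si sj + dist si ri) :=
      mul_le_mul h1 h2 hq (by positivity)
    rcases le_total (dist si ri) (dist sj rj) with hc | hc <;>
      nlinarith [dist_nonneg (x := si) (y := sj)]
  · have hm : dist si rj * dist sj ri ≤
        dist si rj * (dist sj rj + dist si rj + dist si ri) :=
      mul_le_mul_of_nonneg_left h5 hp
    rcases le_total (dist si ri) (dist sj rj) with hc | hc <;> nlinarith
  · have hm : dist si rj * dist sj ri ≤
        (dist si ri + dist ri sj + dist sj rj) * dist ri sj :=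
      mul_le_mul h6 h7 hq (by positivity)
    rcases le_total (dist si ri) (dist sj rj) with hc | hc <;>
      nlinarith [dist_nonneg (x := ri) (y := sj)]
  · have hm : dist si rj * dist sj ri ≤ (dist si ri + dist ri rj) * (dist sj rj + dist ri rj) :=
      mul_le_mul h3 h4 hq (by positivity)
    rcases le_total (dist si ri) (dist sj rj) with hc | hc
    · nlinarith [dist_nonneg (x := ri) (y := rj),
        mul_nonneg (sub_nonneg.2 hc) (dist_nonneg (x := ri) (y := rj))]
    · by_contra hx
      push_neg at hx
      have t1 : dist si ri * dist ri rj ≤ dist si ri * (3 * dist sj rj) :=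
        mul_le_mul_of_nonneg_left hx.le ha
      have t2 : dist sj rj * dist ri rj < dist sj rj * (3 * dist sj rj) :=
        mul_lt_mul_of_pos_left hx hb0
      have t3 : dist ri rj * dist ri rj ≤ (3 * dist sj rj) * (3 * dist sj rj) :=
        mul_self_le_mul_self dist_nonneg hx.le
      have t4 : dist sj rj * dist sj rj ≤ dist si ri * dist sj rj :=
        mul_le_mul_of_nonneg_right hc hb
      linarith only [t1, t2, t3, t4, hm, key2, hind]
end

section
/- Let c > 1 be a real and let t = 1/(1 − 1/c), and let S be a set of links with powers P such that for each i ∈ S: P(i)/𝔩_i^α > t·∑_{j ∈ S, j≠i} P(j)/d_{ji}^α (S is t-strong with zero noise), and suppose P(i) ≥ c·N_i·𝔩_i^α for noise values N_i ≥ 0. Then S is feasible with noise: for each i ∈ S, P(i)/𝔩_i^α − N_i > ∑_{j ∈ S, j≠i} P(j)/d_{ji}^α. -/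
/-- if `S` is `t`-strong with zero noise, `t = 1/(1 − 1/c)` with
`c > 1`, and `P i ≥ c·N_i·𝔩_i^α`, then `S` is feasible with noise:
`P i/𝔩_i^α − N_i > ∑_{j ≠ i} P j/d_{ji}^α`. -/
theorem stmt17 {ι : Type*} [DecidableEq ι] (α c t : ℝ) (hc : 1 < c)
    (ht : t = 1 / (1 - 1 / c)) (hα : 0 < α)
    (S : Finset ι) (P L N : ι → ℝ) (d : ι → ι → ℝ)
    (hL : ∀ i, 0 < L i) (hP : ∀ i, 0 < P i) (hN : ∀ i, 0 ≤ N i)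
    (hd : ∀ i j, 0 < d i j)
    (hstrong : ∀ i ∈ S,
      P i / L i ^ α > t * ∑ j ∈ S.erase i, P j / d j i ^ α)
    (hpow : ∀ i, c * N i * L i ^ α ≤ P i) :
    ∀ i ∈ S, P i / L i ^ α - N i > ∑ j ∈ S.erase i, P j / d j i ^ α := by
  intro i hi
  have hc0 : (0:ℝ) < c := by linarith
  have h1c : 0 < 1 - 1/c := by
    have : 1/c < 1 := by rw [div_lt_one hc0]; exact hc
    linarith
  have hLα : 0 < L i ^ α := Real.rpow_pos_of_pos (hL i) α
  have ht1 : (1 - 1/c) * t = 1 := by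
    rw [ht]; field_simp
    exact div_self (by linarith)
  have hs := hstrong i hi
  have key : (1 - 1/c) * (P i / L i ^ α) > ∑ j ∈ S.erase i, P j / d j i ^ α := by
    have h := mul_lt_mul_of_pos_left hs h1c
    rwa [← mul_assoc, ht1, one_mul] at h
  have hN2 : N i ≤ P i / (c * L i ^ α) :=
    (le_div_iff₀ (by positivity)).mpr (by nlinarith [hpow i])
  have heq : P i / (c * L i ^ α) = 1/c * (P i / L i ^ α) := by
    field_simp
  linarith [key, hN2, heq ▸ hN2]
end
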